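/- Let g^{ij}(u) be a smooth nondegenerate contravariant metric of zero curvature with Levi-Civita connection ∇, and let P be the associated Poisson structure of hydrodynamic type. If the components α_i(u) and β_i(u) of two reduced 1-forms depend only on the coordinates u¹,…,uⁿ (not on their derivatives), then the bracket {α,β} := Lie_{Pβ}α − Lie_{Pα}β + δ⟨β, Pα⟩ has components {α,β}_i = Σ_{k,l,m} ( (∇_m β_l) g^{kl} (∇_k α_i) − (∇_m α_l) g^{kl} (∇_k β_i) ) u^m_x, where ∇_m denotes the covariant derivative with respect to ∂/∂u^m. -/
import Mathlib


open Finset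

/-- An abstract model of the ring `𝒜` of differential polynomials in the formal
variables `u^i_{(s)}` (`i = 1,…,n`, `s ≥ 0`, `u^i_{(0)} = u^i`): a commutative
`ℝ`-algebra `A` equipped with the variables `u (i,s)`, the partial derivatives
`pd (i,s) = ∂/∂u^i_{(s)}` (commuting `ℝ`-linear derivations with
`∂u^j_{(t)}/∂u^i_{(s)} = δ`), a finiteness witness `supp f` (each `f` depends on
finitely many of the variables), and the total `x`-derivative
`∂_x f = Σ_{i,s} u^i_{(s+1)} ∂f/∂u^i_{(s)}` (a finite sum on each `f`). -/
structure DiffPolyAlg (n : ℕ) (A : Type*) [CommRing A] [Algebra ℝ A] where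
  u : Fin n × ℕ → A
  pd : Fin n × ℕ → A → A
  pd_add : ∀ v f g, pd v (f + g) = pd v f + pd v g
  pd_smul : ∀ v (r : ℝ) f, pd v (r • f) = r • pd v f
  pd_mul : ∀ v f g, pd v (f * g) = pd v f * g + f * pd v g
  pd_u : ∀ v w, pd v (u w) = if v = w then 1 else 0
  pd_comm : ∀ v w f, pd v (pd w f) = pd w (pd v f)
  supp : A → Finset (Fin n × ℕ)
  pd_eq_zero : ∀ f v, v ∉ supp f → pd v f = 0
  Dx : A → A
  Dx_add : ∀ f g, Dx (f + g) = Dx f + Dx g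
  Dx_smul : ∀ (r : ℝ) f, Dx (r • f) = r • Dx f
  Dx_mul : ∀ f g, Dx (f * g) = Dx f * g + f * Dx g
  Dx_spec : ∀ f, ∀ S : Finset (Fin n × ℕ), supp f ⊆ S →
      Dx f = ∑ v ∈ S, u (v.1, v.2 + 1) * pd v f

namespace DiffPolyAlg

variable {n : ℕ} {A : Type*} [CommRing A] [Algebra ℝ A]

/-- The finite set of orders `s` such that `∂f/∂u^i_{(s)}` can be nonzero;
sums `Σ_s` below are taken over this set. -/
def sset (D : DiffPolyAlg n A) (f : A) (i : Fin n) : Finset ℕ :=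
  ((D.supp f).filter fun v => v.1 = i).image Prod.snd

/-- The components `{α,β}_i = Σ_{k,l,s} η^{kl} [ (∂_x^{s+1}β_l)(∂α_i/∂u^k_{(s)})
− (∂_x^{s+1}α_l)(∂β_i/∂u^k_{(s)}) ]` of the Poisson bracket of two reduced
1-forms in flat coordinates (the sum over the pairs `(k,s)` is restricted to the
finite set where the partial derivatives can be nonzero). -/
def pbracket (D : DiffPolyAlg n A) (η : Fin n → Fin n → ℝ)
    (α β : Fin n → A) : Fin n → A := fun i =>
  (∑ v ∈ D.supp (α i), ∑ l, η v.1 l • (D.Dx^[v.2 + 1] (β l) * D.pd v (α i)))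
    - ∑ v ∈ D.supp (β i), ∑ l, η v.1 l • (D.Dx^[v.2 + 1] (α l) * D.pd v (β i))

end DiffPolyAlg

namespace DiffPolyAlg

variable {n : ℕ} {A : Type*} [CommRing A] [Algebra ℝ A]

/-- The contravariant Christoffel symbols `Γ^{ij}_k := −g^{is} Γ^j_{sk}`. -/
def contraGamma (g : Fin n → Fin n → A) (Γ : Fin n → Fin n → Fin n → A) :
    Fin n → Fin n → Fin n → A := fun i j k => -(∑ s, g i s * Γ j s k)

/-- The hydrodynamic Poisson structure applied to a reduced 1-form:
`(Pβ)^i = g^{il} ∂_x β_l + Γ^{il}_k u^k_x β_l`. -/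
def hydroP (D : DiffPolyAlg n A) (g : Fin n → Fin n → A)
    (Γ : Fin n → Fin n → Fin n → A) (β : Fin n → A) : Fin n → A := fun i =>
  (∑ l, g i l * D.Dx (β l))
    + ∑ l, ∑ k, contraGamma g Γ i l k * (D.u (k, 1) * β l)

/-- The coefficient of `δu^i_{(t)}` in the (non-reduced) 1-form
`Lie_{Pβ}α − Lie_{Pα}β + δ⟨β, Pα⟩` for the hydrodynamic Poisson structure. -/
def rawBracketCompG (D : DiffPolyAlg n A) (g : Fin n → Fin n → A)
    (Γ : Fin n → Fin n → Fin n → A) (α β : Fin n → A) : Fin n → ℕ → A :=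
  fun i t =>
    (if t = 0 then
        (∑ v ∈ D.supp (α i), D.Dx^[v.2] (hydroP D g Γ β v.1) * D.pd v (α i))
          - ∑ v ∈ D.supp (β i), D.Dx^[v.2] (hydroP D g Γ α v.1) * D.pd v (β i)
      else 0)
      + (∑ k, α k * D.pd (i, t) (hydroP D g Γ β k))
      - (∑ k, β k * D.pd (i, t) (hydroP D g Γ α k))
      + D.pd (i, t) (∑ l, β l * hydroP D g Γ α l)

/-- A finite set of orders `t` containing all those for which the coefficient of
`δu^i_{(t)}` in `Lie_{Pβ}α − Lie_{Pα}β + δ⟨β, Pα⟩` can be nonzero. -/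
def rawBracketOrdersG (D : DiffPolyAlg n A) (g : Fin n → Fin n → A)
    (Γ : Fin n → Fin n → Fin n → A) (α β : Fin n → A) (i : Fin n) : Finset ℕ :=
  insert 0
    ((Finset.univ.biUnion fun k =>
        D.sset (hydroP D g Γ β k) i ∪ D.sset (hydroP D g Γ α k) i)
      ∪ D.sset (∑ l, β l * hydroP D g Γ α l) i)

/-- The reduced components `R_i = Σ_t (−1)^t ∂_x^t (coefficient of δu^i_{(t)})`
of the 1-form `{α,β} = Lie_{Pβ}α − Lie_{Pα}β + δ⟨β, Pα⟩`; two 1-forms are equal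
modulo the image of `d` precisely when their reduced components coincide. -/
def reducedRawBracketG (D : DiffPolyAlg n A) (g : Fin n → Fin n → A)
    (Γ : Fin n → Fin n → Fin n → A) (α β : Fin n → A) : Fin n → A := fun i =>
  ∑ t ∈ rawBracketOrdersG D g Γ α β i,
    ((-1 : ℝ) ^ t) • D.Dx^[t] (rawBracketCompG D g Γ α β i t)

end DiffPolyAlg

namespace DiffPolyAlg

variable {n : ℕ} {A : Type*} [CommRing A] [Algebra ℝ A]

/-- The covariant derivative `∇_m ω_l = ∂_m ω_l − Γ^s_{lm} ω_s` of a covector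
field whose components depend only on the coordinates `u¹,…,uⁿ`. -/
def covD (D : DiffPolyAlg n A) (Γ : Fin n → Fin n → Fin n → A)
    (ω : Fin n → A) (m l : Fin n) : A :=
  D.pd (m, 0) (ω l) - ∑ s, Γ s l m * ω s

end DiffPolyAlg
namespace DiffPolyAlg

variable {n : ℕ} {A : Type*} [CommRing A] [Algebra ℝ A] (D : DiffPolyAlg n A)

/-- `pd v` as an additive monoid hom. -/
def pdH (v : Fin n × ℕ) : A →+ A := AddMonoidHom.mk' (D.pd v) (D.pd_add v)

/-- `Dx` as an additive monoid hom. -/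
def DxH : A →+ A := AddMonoidHom.mk' D.Dx D.Dx_add

@[simp] lemma pd_zero (v : Fin n × ℕ) : D.pd v (0 : A) = 0 := (D.pdH v).map_zero

lemma pd_sub (v : Fin n × ℕ) (f g : A) : D.pd v (f - g) = D.pd v f - D.pd v g :=
  map_sub (D.pdH v) f g

lemma pd_neg (v : Fin n × ℕ) (f : A) : D.pd v (-f) = -D.pd v f :=
  map_neg (D.pdH v) f

lemma pd_sum {ι : Type*} (v : Fin n × ℕ) (s : Finset ι) (f : ι → A) :
    D.pd v (∑ x ∈ s, f x) = ∑ x ∈ s, D.pd v (f x) :=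
  map_sum (D.pdH v) f s

@[simp] lemma Dx_zero : D.Dx (0 : A) = 0 := D.DxH.map_zero

lemma Dx_sub (f g : A) : D.Dx (f - g) = D.Dx f - D.Dx g := map_sub D.DxH f g

lemma Dx_sum {ι : Type*} (s : Finset ι) (f : ι → A) :
    D.Dx (∑ x ∈ s, f x) = ∑ x ∈ s, D.Dx (f x) := map_sum D.DxH f s

@[simp] lemma pd_one (v : Fin n × ℕ) : D.pd v (1 : A) = 0 := by
  have h := D.pd_mul v 1 1
  rw [mul_one, mul_one, one_mul] at h
  have h2 : D.pd v 1 + D.pd v 1 = D.pd v 1 + 0 := by rw [add_zero, ← h]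
  exact add_left_cancel h2

@[simp] lemma pd_ite (v : Fin n × ℕ) (P : Prop) [Decidable P] :
    D.pd v (if P then (1 : A) else 0) = 0 := by
  split <;> simp

/-- `f` depends only on `u¹,…,uⁿ` (no derivative variables). -/
def FunOnly (f : A) : Prop := ∀ v : Fin n × ℕ, 1 ≤ v.2 → D.pd v f = 0

lemma funOnly_add {f g : A} (hf : D.FunOnly f) (hg : D.FunOnly g) :
    D.FunOnly (f + g) := fun v hv => by rw [D.pd_add, hf v hv, hg v hv, add_zero]

lemma funOnly_mul {f g : A} (hf : D.FunOnly f) (hg : D.FunOnly g) :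
    D.FunOnly (f * g) := fun v hv => by
  rw [D.pd_mul, hf v hv, hg v hv, mul_zero, zero_mul, add_zero]

lemma funOnly_neg {f : A} (hf : D.FunOnly f) : D.FunOnly (-f) := fun v hv => by
  rw [D.pd_neg, hf v hv, neg_zero]

lemma funOnly_sum {ι : Type*} {s : Finset ι} {f : ι → A}
    (hf : ∀ x ∈ s, D.FunOnly (f x)) : D.FunOnly (∑ x ∈ s, f x) := fun v hv => by
  rw [D.pd_sum]
  exact Finset.sum_eq_zero fun x hx => hf x hx v hv

lemma funOnly_pd0 {f : A} (hf : D.FunOnly f) (m : Fin n) :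
    D.FunOnly (D.pd (m, 0) f) := fun v hv => by
  rw [D.pd_comm, hf v hv, D.pd_zero]

/-- Reduction of a `supp`-sum against `pd` for a function of `u` only. -/
lemma sum_supp_eq {f : A} (hf : D.FunOnly f) (G : Fin n × ℕ → A) :
    ∑ v ∈ D.supp f, G v * D.pd v f = ∑ j, G (j, 0) * D.pd (j, 0) f := by
  classical
  set T : Finset (Fin n × ℕ) := Finset.univ.image (fun j : Fin n => (j, 0)) with hT
  have h1 : ∑ v ∈ D.supp f, G v * D.pd v f = ∑ v ∈ D.supp f ∪ T, G v * D.pd v f := by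
    refine Finset.sum_subset Finset.subset_union_left fun v _ hv => ?_
    rw [D.pd_eq_zero f v hv, mul_zero]
  have h2 : ∑ v ∈ T, G v * D.pd v f = ∑ v ∈ D.supp f ∪ T, G v * D.pd v f := by
    refine Finset.sum_subset Finset.subset_union_right fun v _ hv => ?_
    have hv2 : 1 ≤ v.2 := by
      rcases Nat.eq_zero_or_pos v.2 with h0 | h0
      · exact absurd (by simp [hT, Finset.mem_image, ← h0]) hv
      · exact h0
    rw [hf v hv2, mul_zero]
  rw [h1, ← h2, hT, Finset.sum_image (by intro a _ b _ h; exact (Prod.mk.injEq _ _ _ _ ▸ h).1)]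

/-- `Dx` of a function of `u` only. -/
lemma Dx_funOnly {f : A} (hf : D.FunOnly f) :
    D.Dx f = ∑ j, D.u (j, 1) * D.pd (j, 0) f := by
  rw [D.Dx_spec f (D.supp f) (le_refl _)]
  exact D.sum_supp_eq hf (fun v => D.u (v.1, v.2 + 1))

end DiffPolyAlg
namespace DiffPolyAlg

variable {n : ℕ} {A : Type*} [CommRing A] [Algebra ℝ A] (D : DiffPolyAlg n A)
variable (g : Fin n → Fin n → A) (Γ : Fin n → Fin n → Fin n → A)

/-- The coefficient of `u^m_x` in `(Pω)^k`. -/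
def pcoef (ω : Fin n → A) (k m : Fin n) : A :=
  ∑ l, (g k l * D.pd (m, 0) (ω l) + contraGamma g Γ k l m * ω l)

lemma funOnly_contraGamma (hg : ∀ i j, D.FunOnly (g i j))
    (hΓ : ∀ i j k, D.FunOnly (Γ i j k)) (i j k : Fin n) :
    D.FunOnly (contraGamma g Γ i j k) :=
  D.funOnly_neg (D.funOnly_sum fun s _ => D.funOnly_mul (hg i s) (hΓ j s k))

lemma funOnly_pcoef (hg : ∀ i j, D.FunOnly (g i j))
    (hΓ : ∀ i j k, D.FunOnly (Γ i j k)) {ω : Fin n → A}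
    (hω : ∀ l, D.FunOnly (ω l)) (k m : Fin n) :
    D.FunOnly (D.pcoef g Γ ω k m) :=
  D.funOnly_sum fun l _ => D.funOnly_add
    (D.funOnly_mul (hg k l) (D.funOnly_pd0 (hω l) m))
    (D.funOnly_mul (D.funOnly_contraGamma g Γ hg hΓ k l m) (hω l))

lemma hydroP_eq {ω : Fin n → A} (hω : ∀ l, D.FunOnly (ω l)) (i : Fin n) :
    hydroP D g Γ ω i = ∑ m, D.u (m, 1) * D.pcoef g Γ ω i m := by
  unfold hydroP pcoef
  have h1 : ∑ l, g i l * D.Dx (ω l)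
      = ∑ m, ∑ l, D.u (m, 1) * (g i l * D.pd (m, 0) (ω l)) := by
    rw [Finset.sum_comm]
    refine Finset.sum_congr rfl fun l _ => ?_
    rw [D.Dx_funOnly (hω l), Finset.mul_sum]
    exact Finset.sum_congr rfl fun m _ => by ring
  have h2 : ∑ l, ∑ k, contraGamma g Γ i l k * (D.u (k, 1) * ω l)
      = ∑ m, ∑ l, D.u (m, 1) * (contraGamma g Γ i l m * ω l) := by
    rw [Finset.sum_comm]
    exact Finset.sum_congr rfl fun m _ => Finset.sum_congr rfl fun l _ => by ring
  rw [h1, h2, ← Finset.sum_add_distrib]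
  refine Finset.sum_congr rfl fun m _ => ?_
  rw [Finset.mul_sum, ← Finset.sum_add_distrib]
  exact Finset.sum_congr rfl fun l _ => by rw [mul_add]

lemma pd_u_fst_zero (i m : Fin n) : D.pd (i, 0) (D.u (m, 1)) = 0 := by
  rw [D.pd_u]
  simp

lemma pd0_hydroP (hg : ∀ i j, D.FunOnly (g i j)) (hΓ : ∀ i j k, D.FunOnly (Γ i j k))
    {ω : Fin n → A} (hω : ∀ l, D.FunOnly (ω l)) (i k : Fin n) :
    D.pd (i, 0) (hydroP D g Γ ω k)
      = ∑ m, D.u (m, 1) * D.pd (i, 0) (D.pcoef g Γ ω k m) := by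
  rw [D.hydroP_eq g Γ hω, D.pd_sum]
  refine Finset.sum_congr rfl fun m _ => ?_
  rw [D.pd_mul, D.pd_u_fst_zero, zero_mul, zero_add]

lemma pd1_hydroP (hg : ∀ i j, D.FunOnly (g i j)) (hΓ : ∀ i j k, D.FunOnly (Γ i j k))
    {ω : Fin n → A} (hω : ∀ l, D.FunOnly (ω l)) (i k : Fin n) :
    D.pd (i, 1) (hydroP D g Γ ω k) = D.pcoef g Γ ω k i := by
  rw [D.hydroP_eq g Γ hω, D.pd_sum]
  have h : ∀ m : Fin n, D.pd (i, 1) (D.u (m, 1) * D.pcoef g Γ ω k m)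
      = (if i = m then 1 else 0) * D.pcoef g Γ ω k m := by
    intro m
    rw [D.pd_mul, D.funOnly_pcoef g Γ hg hΓ hω k m (i, 1) le_rfl, mul_zero, add_zero,
      D.pd_u]
    simp [Prod.ext_iff]
  rw [Finset.sum_congr rfl fun m _ => h m]
  simp

lemma pdt_hydroP (hg : ∀ i j, D.FunOnly (g i j)) (hΓ : ∀ i j k, D.FunOnly (Γ i j k))
    {ω : Fin n → A} (hω : ∀ l, D.FunOnly (ω l)) (i : Fin n) {t : ℕ} (ht : 2 ≤ t)
    (k : Fin n) : D.pd (i, t) (hydroP D g Γ ω k) = 0 := by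
  rw [D.hydroP_eq g Γ hω, D.pd_sum]
  refine Finset.sum_eq_zero fun m _ => ?_
  rw [D.pd_mul, D.funOnly_pcoef g Γ hg hΓ hω k m (i, t) (by omega), mul_zero, add_zero,
    D.pd_u, if_neg (by simp [Prod.ext_iff]; omega), zero_mul]

end DiffPolyAlg
namespace DiffPolyAlg

variable {n : ℕ} {A : Type*} [CommRing A] [Algebra ℝ A] (D : DiffPolyAlg n A)
variable (g : Fin n → Fin n → A) (Γ : Fin n → Fin n → Fin n → A)

lemma mem_sset_of_supp {f : A} {i : Fin n} {t : ℕ} (h : (i, t) ∈ D.supp f) :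
    t ∈ D.sset f i :=
  Finset.mem_image.mpr ⟨(i, t), Finset.mem_filter.mpr ⟨h, rfl⟩, rfl⟩

variable (α β : Fin n → A)

lemma comp1_eq (hg : ∀ i j, D.FunOnly (g i j)) (hΓ : ∀ i j k, D.FunOnly (Γ i j k))
    (hα : ∀ l, D.FunOnly (α l)) (hβ : ∀ l, D.FunOnly (β l)) (i : Fin n) :
    rawBracketCompG D g Γ α β i 1 = ∑ k, α k * D.pcoef g Γ β k i := by
  unfold rawBracketCompG
  rw [if_neg (by norm_num), D.pd_sum]
  have h3 : ∀ l : Fin n, D.pd (i, 1) (β l * hydroP D g Γ α l)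
      = β l * D.pcoef g Γ α l i := by
    intro l
    rw [D.pd_mul, hβ l (i, 1) le_rfl, zero_mul, zero_add,
      D.pd1_hydroP g Γ hg hΓ hα]
  rw [Finset.sum_congr rfl fun l _ => h3 l,
    Finset.sum_congr rfl fun k (_ : k ∈ Finset.univ) =>
      congrArg (α k * ·) (D.pd1_hydroP g Γ hg hΓ hβ i k),
    Finset.sum_congr rfl fun k (_ : k ∈ Finset.univ) =>
      congrArg (β k * ·) (D.pd1_hydroP g Γ hg hΓ hα i k)]
  ring

lemma compt_eq (hg : ∀ i j, D.FunOnly (g i j)) (hΓ : ∀ i j k, D.FunOnly (Γ i j k))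
    (hα : ∀ l, D.FunOnly (α l)) (hβ : ∀ l, D.FunOnly (β l)) (i : Fin n)
    {t : ℕ} (ht : 2 ≤ t) :
    rawBracketCompG D g Γ α β i t = 0 := by
  unfold rawBracketCompG
  rw [if_neg (by omega), D.pd_sum]
  have h3 : ∀ l : Fin n, D.pd (i, t) (β l * hydroP D g Γ α l) = 0 := by
    intro l
    rw [D.pd_mul, hβ l (i, t) (by omega), zero_mul, zero_add,
      D.pdt_hydroP g Γ hg hΓ hα i ht, mul_zero]
  rw [Finset.sum_congr rfl fun l _ => h3 l,
    Finset.sum_congr rfl fun k (_ : k ∈ Finset.univ) =>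
      congrArg (α k * ·) (D.pdt_hydroP g Γ hg hΓ hβ i ht k),
    Finset.sum_congr rfl fun k (_ : k ∈ Finset.univ) =>
      congrArg (β k * ·) (D.pdt_hydroP g Γ hg hΓ hα i ht k)]
  simp

lemma sum_u_mul_left (p : Fin n → Fin n → A) (q : Fin n → A) :
    ∑ j, (∑ m, D.u (m, 1) * p j m) * q j = ∑ m, D.u (m, 1) * ∑ j, p j m * q j := by
  simp only [Finset.sum_mul]
  rw [Finset.sum_comm]
  refine Finset.sum_congr rfl fun m _ => ?_
  rw [Finset.mul_sum]
  exact Finset.sum_congr rfl fun j _ => by ring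

lemma sum_u_mul_right (a : Fin n → A) (p : Fin n → Fin n → A) :
    ∑ k, a k * (∑ m, D.u (m, 1) * p k m) = ∑ m, D.u (m, 1) * ∑ k, a k * p k m := by
  simp only [Finset.mul_sum]
  rw [Finset.sum_comm]
  refine Finset.sum_congr rfl fun m _ => ?_
  exact Finset.sum_congr rfl fun j _ => by ring

lemma comp0_eq (hg : ∀ i j, D.FunOnly (g i j)) (hΓ : ∀ i j k, D.FunOnly (Γ i j k))
    (hα : ∀ l, D.FunOnly (α l)) (hβ : ∀ l, D.FunOnly (β l)) (i : Fin n) :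
    rawBracketCompG D g Γ α β i 0 =
      ∑ m, D.u (m, 1) *
        ((∑ j, D.pcoef g Γ β j m * D.pd (j, 0) (α i))
          - (∑ j, D.pcoef g Γ α j m * D.pd (j, 0) (β i))
          + (∑ k, α k * D.pd (i, 0) (D.pcoef g Γ β k m))
          - (∑ k, β k * D.pd (i, 0) (D.pcoef g Γ α k m))
          + (∑ l, (D.pd (i, 0) (β l) * D.pcoef g Γ α l m
              + β l * D.pd (i, 0) (D.pcoef g Γ α l m)))) := by
  unfold rawBracketCompG
  rw [if_pos rfl]
  have hA1 : ∑ v ∈ D.supp (α i), D.Dx^[v.2] (hydroP D g Γ β v.1) * D.pd v (α i)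
      = ∑ m, D.u (m, 1) * ∑ j, D.pcoef g Γ β j m * D.pd (j, 0) (α i) := by
    rw [D.sum_supp_eq (hα i) (fun v => D.Dx^[v.2] (hydroP D g Γ β v.1))]
    simp only [Function.iterate_zero_apply]
    rw [Finset.sum_congr rfl fun j (_ : j ∈ Finset.univ) =>
      congrArg (· * D.pd (j, 0) (α i)) (D.hydroP_eq g Γ hβ j)]
    exact D.sum_u_mul_left _ _
  have hA2 : ∑ v ∈ D.supp (β i), D.Dx^[v.2] (hydroP D g Γ α v.1) * D.pd v (β i)
      = ∑ m, D.u (m, 1) * ∑ j, D.pcoef g Γ α j m * D.pd (j, 0) (β i) := by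
    rw [D.sum_supp_eq (hβ i) (fun v => D.Dx^[v.2] (hydroP D g Γ α v.1))]
    simp only [Function.iterate_zero_apply]
    rw [Finset.sum_congr rfl fun j (_ : j ∈ Finset.univ) =>
      congrArg (· * D.pd (j, 0) (β i)) (D.hydroP_eq g Γ hα j)]
    exact D.sum_u_mul_left _ _
  have hB1 : ∑ k, α k * D.pd (i, 0) (hydroP D g Γ β k)
      = ∑ m, D.u (m, 1) * ∑ k, α k * D.pd (i, 0) (D.pcoef g Γ β k m) := by
    rw [Finset.sum_congr rfl fun k (_ : k ∈ Finset.univ) =>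
      congrArg (α k * ·) (D.pd0_hydroP g Γ hg hΓ hβ i k)]
    exact D.sum_u_mul_right _ _
  have hB2 : ∑ k, β k * D.pd (i, 0) (hydroP D g Γ α k)
      = ∑ m, D.u (m, 1) * ∑ k, β k * D.pd (i, 0) (D.pcoef g Γ α k m) := by
    rw [Finset.sum_congr rfl fun k (_ : k ∈ Finset.univ) =>
      congrArg (β k * ·) (D.pd0_hydroP g Γ hg hΓ hα i k)]
    exact D.sum_u_mul_right _ _
  have hB3 : D.pd (i, 0) (∑ l, β l * hydroP D g Γ α l)
      = ∑ m, D.u (m, 1) * ∑ l, (D.pd (i, 0) (β l) * D.pcoef g Γ α l m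
          + β l * D.pd (i, 0) (D.pcoef g Γ α l m)) := by
    rw [D.pd_sum]
    have : ∀ l : Fin n, D.pd (i, 0) (β l * hydroP D g Γ α l)
        = D.pd (i, 0) (β l) * hydroP D g Γ α l
          + β l * D.pd (i, 0) (hydroP D g Γ α l) := fun l => D.pd_mul _ _ _
    rw [Finset.sum_congr rfl fun l _ => this l]
    rw [Finset.sum_add_distrib]
    have e1 : ∑ l, D.pd (i, 0) (β l) * hydroP D g Γ α l
        = ∑ m, D.u (m, 1) * ∑ l, D.pd (i, 0) (β l) * D.pcoef g Γ α l m := by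
      rw [Finset.sum_congr rfl fun l (_ : l ∈ Finset.univ) =>
        congrArg (D.pd (i, 0) (β l) * ·) (D.hydroP_eq g Γ hα l)]
      exact D.sum_u_mul_right _ _
    have e2 : ∑ l, β l * D.pd (i, 0) (hydroP D g Γ α l)
        = ∑ m, D.u (m, 1) * ∑ l, β l * D.pd (i, 0) (D.pcoef g Γ α l m) := by
      rw [Finset.sum_congr rfl fun l (_ : l ∈ Finset.univ) =>
        congrArg (β l * ·) (D.pd0_hydroP g Γ hg hΓ hα i l)]
      exact D.sum_u_mul_right _ _
    rw [e1, e2, ← Finset.sum_add_distrib]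
    refine Finset.sum_congr rfl fun m _ => ?_
    rw [← mul_add, ← Finset.sum_add_distrib]
  rw [hA1, hA2, hB1, hB2, hB3]
  simp only [mul_add, mul_sub, Finset.sum_add_distrib, Finset.sum_sub_distrib]

lemma reduced_eq (hg : ∀ i j, D.FunOnly (g i j)) (hΓ : ∀ i j k, D.FunOnly (Γ i j k))
    (hα : ∀ l, D.FunOnly (α l)) (hβ : ∀ l, D.FunOnly (β l)) (i : Fin n) :
    reducedRawBracketG D g Γ α β i =
      rawBracketCompG D g Γ α β i 0
        - D.Dx (∑ k, α k * D.pcoef g Γ β k i) := by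
  unfold reducedRawBracketG
  set S := rawBracketOrdersG D g Γ α β i with hS
  set f : ℕ → A := fun t => ((-1 : ℝ) ^ t) • D.Dx^[t] (rawBracketCompG D g Γ α β i t)
    with hf
  have h0 : (0 : ℕ) ∈ S := Finset.mem_insert_self _ _
  have hf0 : f 0 = rawBracketCompG D g Γ α β i 0 := by
    simp [hf]
  have hf1 : f 1 = -D.Dx (∑ k, α k * D.pcoef g Γ β k i) := by
    simp only [hf, pow_one, Function.iterate_one, neg_smul, one_smul]
    rw [D.comp1_eq g Γ α β hg hΓ hα hβ i]
  have hft : ∀ t, 2 ≤ t → f t = 0 := by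
    intro t ht
    simp only [hf]
    rw [D.compt_eq g Γ α β hg hΓ hα hβ i ht, Function.iterate_fixed D.Dx_zero t,
      smul_zero]
  by_cases h1 : (1 : ℕ) ∈ S
  · have hsub : ({0, 1} : Finset ℕ) ⊆ S := by
      intro t ht
      simp only [Finset.mem_insert, Finset.mem_singleton] at ht
      rcases ht with rfl | rfl
      · exact h0
      · exact h1
    rw [← Finset.sum_subset hsub (fun t _ ht01 => hft t (by
      simp only [Finset.mem_insert, Finset.mem_singleton] at ht01
      omega))]
    rw [Finset.sum_pair (by norm_num : (0 : ℕ) ≠ 1), hf0, hf1, sub_eq_add_neg]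
  · have hz : ∀ k, D.pcoef g Γ β k i = 0 := by
      intro k
      have hmem : (i, 1) ∉ D.supp (hydroP D g Γ β k) := by
        intro hmem
        refine h1 ?_
        refine Finset.mem_insert_of_mem (Finset.mem_union_left _ ?_)
        exact Finset.mem_biUnion.mpr ⟨k, Finset.mem_univ k,
          Finset.mem_union_left _ (D.mem_sset_of_supp hmem)⟩
      rw [← D.pd1_hydroP g Γ hg hΓ hβ i k]
      exact D.pd_eq_zero _ _ hmem
    have hzz : (∑ k, α k * D.pcoef g Γ β k i) = 0 :=
      Finset.sum_eq_zero fun k _ => by rw [hz k, mul_zero]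
    have hsub : ({0} : Finset ℕ) ⊆ S := by
      intro t ht
      simp only [Finset.mem_singleton] at ht
      subst ht; exact h0
    rw [← Finset.sum_subset hsub (fun t htS ht0 => by
      simp only [Finset.mem_singleton] at ht0
      rcases Nat.lt_or_ge t 2 with h2 | h2
      · interval_cases t
        · exact absurd rfl ht0
        · rw [Function.iterate_one, D.comp1_eq g Γ α β hg hΓ hα hβ i, hzz,
            D.Dx_zero, smul_zero]
      · exact hft t h2)]
    rw [Finset.sum_singleton, hzz, D.Dx_zero, sub_zero]
    exact hf0

end DiffPolyAlg
namespace DiffPolyAlg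

variable {n : ℕ} {A : Type*} [CommRing A] [Algebra ℝ A] (D : DiffPolyAlg n A)
variable (g gl : Fin n → Fin n → A) (Γ : Fin n → Fin n → Fin n → A)

lemma sum_swap12 (f : Fin n → Fin n → Fin n → A) :
    ∑ a, ∑ b, ∑ c, f a b c = ∑ b, ∑ a, ∑ c, f a b c := Finset.sum_comm

lemma sum_swap23 (f : Fin n → Fin n → Fin n → A) :
    ∑ a, ∑ b, ∑ c, f a b c = ∑ a, ∑ c, ∑ b, f a b c :=
  Finset.sum_congr rfl fun _ _ => Finset.sum_comm

lemma sum_swap13 (f : Fin n → Fin n → Fin n → A) :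
    ∑ a, ∑ b, ∑ c, f a b c = ∑ c, ∑ b, ∑ a, f a b c := by
  rw [sum_swap12, sum_swap23, sum_swap12]

/-- `gl` is also a left inverse of `g`. -/
lemma glg (hg_inv : ∀ i j, ∑ s, g i s * gl s j = if i = j then 1 else 0)
    (i j : Fin n) : ∑ s, gl i s * g s j = if i = j then 1 else 0 := by
  have hM : (Matrix.of g) * (Matrix.of gl) = 1 := by
    ext a b
    simpa [Matrix.mul_apply, Matrix.one_apply] using hg_inv a b
  have hN := mul_eq_one_comm.mp hM
  simpa [Matrix.mul_apply, Matrix.one_apply] using congrFun (congrFun hN i) j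

/-- Contraction of `gl` with the contravariant Christoffel symbols. -/
lemma gl_contraGamma (hg_inv : ∀ i j, ∑ s, g i s * gl s j = if i = j then 1 else 0)
    (p k b : Fin n) : ∑ a, gl p a * contraGamma g Γ a k b = -Γ k p b := by
  unfold contraGamma
  have h1 : ∀ a, gl p a * -(∑ t, g a t * Γ k t b)
      = ∑ t, -(gl p a * g a t * Γ k t b) := by
    intro a
    rw [mul_neg, Finset.mul_sum, ← Finset.sum_neg_distrib]
    exact Finset.sum_congr rfl fun t _ => by ring
  rw [Finset.sum_congr rfl fun a _ => h1 a, Finset.sum_comm]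
  have h2 : ∀ t, ∑ a, -(gl p a * g a t * Γ k t b)
      = -((∑ a, gl p a * g a t) * Γ k t b) := by
    intro t
    rw [Finset.sum_neg_distrib, Finset.sum_mul]
  rw [Finset.sum_congr rfl fun t _ => h2 t]
  simp only [glg g gl hg_inv p]
  simp

/-- Derivative of the contravariant metric in terms of `contraGamma`. -/
lemma dg_eq (hg_symm : ∀ i j, g i j = g j i)
    (hΓ_symm : ∀ i j k, Γ i j k = Γ i k j)
    (hg_inv : ∀ i j, ∑ s, g i s * gl s j = if i = j then 1 else 0)
    (hΓ_metric : ∀ k i j, D.pd (k, 0) (gl i j) =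
      ∑ l, (gl l j * Γ l i k + gl i l * Γ l j k))
    (c k l : Fin n) :
    D.pd (c, 0) (g k l) = contraGamma g Γ k l c + contraGamma g Γ l k c := by
  have hdiff : ∀ j, ∑ s, D.pd (c, 0) (g k s) * gl s j
      = -∑ s, g k s * D.pd (c, 0) (gl s j) := by
    intro j
    have h := congrArg (D.pd (c, 0)) (hg_inv k j)
    rw [D.pd_sum, D.pd_ite] at h
    simp only [D.pd_mul] at h
    rw [Finset.sum_add_distrib] at h
    exact eq_neg_of_add_eq_zero_left h
  have step1 : D.pd (c, 0) (g k l)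
      = ∑ s, D.pd (c, 0) (g k s) * (if s = l then 1 else 0) := by
    simp
  have step2 : D.pd (c, 0) (g k l)
      = ∑ j, (∑ s, D.pd (c, 0) (g k s) * gl s j) * g j l := by
    rw [step1]
    have h : ∀ s : Fin n, D.pd (c, 0) (g k s) * (if s = l then (1:A) else 0)
        = ∑ j, D.pd (c, 0) (g k s) * gl s j * g j l := by
      intro s
      rw [← glg g gl hg_inv s l, Finset.mul_sum]
      exact Finset.sum_congr rfl fun j _ => by ring
    rw [Finset.sum_congr rfl fun s _ => h s, Finset.sum_comm]
    exact Finset.sum_congr rfl fun j _ => (Finset.sum_mul _ _ _).symm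
  rw [step2, Finset.sum_congr rfl fun j (_ : j ∈ Finset.univ) =>
    congrArg (· * g j l) (hdiff j)]
  have step3 : ∀ j : Fin n, (-∑ s, g k s * D.pd (c, 0) (gl s j)) * g j l
      = (∑ s, ∑ t, -(g k s * Γ t s c * (gl t j * g j l)))
        + (∑ t, ∑ s, -(g k s * gl s t * (Γ t j c * g j l))) := by
    intro j
    simp only [hΓ_metric]
    rw [neg_mul, Finset.sum_mul]
    rw [show (∑ t, ∑ s, -(g k s * gl s t * (Γ t j c * g j l)))
        = ∑ s, ∑ t, -(g k s * gl s t * (Γ t j c * g j l)) from Finset.sum_comm]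
    rw [← Finset.sum_add_distrib, ← Finset.sum_neg_distrib]
    refine Finset.sum_congr rfl fun s _ => ?_
    rw [Finset.mul_sum, Finset.sum_mul, ← Finset.sum_add_distrib,
      ← Finset.sum_neg_distrib]
    exact Finset.sum_congr rfl fun t _ => by ring
  rw [Finset.sum_congr rfl fun j _ => step3 j, Finset.sum_add_distrib]
  congr 1
  · -- A-part
    rw [sum_swap13]
    have hA2 : ∀ t : Fin n, ∑ s, ∑ j, -(g k s * Γ t s c * (gl t j * g j l))
        = -((if t = l then 1 else 0) * ∑ s, g k s * Γ t s c) := by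
      intro t
      rw [Finset.sum_comm]
      have h : ∀ j : Fin n, ∑ s, -(g k s * Γ t s c * (gl t j * g j l))
          = -(gl t j * g j l * ∑ s, g k s * Γ t s c) := by
        intro j
        rw [Finset.sum_neg_distrib, Finset.mul_sum]
        congr 1
        exact Finset.sum_congr rfl fun s _ => by ring
      rw [Finset.sum_congr rfl fun j _ => h j, Finset.sum_neg_distrib,
        ← Finset.sum_mul, glg g gl hg_inv t l]
    rw [Finset.sum_congr rfl fun t _ => hA2 t]
    unfold contraGamma
    simp [apply_ite Neg.neg, Finset.sum_ite_eq', ite_mul]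
  · -- B-part
    rw [sum_swap13]
    have hB1 : ∀ s t : Fin n, ∑ j, -(g k s * gl s t * (Γ t j c * g j l))
        = -(g k s * gl s t * ∑ j, Γ t j c * g j l) := by
      intro s t
      rw [Finset.sum_neg_distrib, Finset.mul_sum]
    rw [Finset.sum_congr rfl fun s _ => Finset.sum_congr rfl fun t _ => hB1 s t,
      Finset.sum_comm]
    have hB2 : ∀ t : Fin n, ∑ s, -(g k s * gl s t * ∑ j, Γ t j c * g j l)
        = -((if k = t then 1 else 0) * ∑ j, Γ t j c * g j l) := by
      intro t
      rw [Finset.sum_neg_distrib, ← hg_inv k t, Finset.sum_mul]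
    rw [Finset.sum_congr rfl fun t _ => hB2 t, Finset.sum_neg_distrib]
    unfold contraGamma
    congr 1
    simp only [ite_mul, one_mul, zero_mul, Finset.sum_ite_eq, Finset.mem_univ,
      if_true]
    exact Finset.sum_congr rfl fun j _ => by rw [hg_symm j l]; ring

end DiffPolyAlg
namespace DiffPolyAlg

variable {n : ℕ} {A : Type*} [CommRing A] [Algebra ℝ A] (D : DiffPolyAlg n A)
variable (g gl : Fin n → Fin n → A) (Γ : Fin n → Fin n → Fin n → A)

lemma contract_g (hg_inv : ∀ i j, ∑ s, g i s * gl s j = if i = j then 1 else 0)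
    (i : Fin n) (E : Fin n → A) :
    ∑ a, gl i a * ∑ s, g a s * E s = E i := by
  have h : ∀ a, gl i a * ∑ s, g a s * E s = ∑ s, gl i a * g a s * E s := by
    intro a
    rw [Finset.mul_sum]
    exact Finset.sum_congr rfl fun s _ => by ring
  rw [Finset.sum_congr rfl fun a _ => h a, Finset.sum_comm]
  have h2 : ∀ s, ∑ a, gl i a * g a s * E s = (if i = s then 1 else 0) * E s := by
    intro s
    rw [← Finset.sum_mul, glg g gl hg_inv i s]
  rw [Finset.sum_congr rfl fun s _ => h2 s]
  simp

lemma contract_gc (hg_inv : ∀ i j, ∑ s, g i s * gl s j = if i = j then 1 else 0)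
    (i k : Fin n) (F : Fin n → A) :
    ∑ a, gl i a * ∑ s, contraGamma g Γ a k s * F s
      = -∑ s, Γ k i s * F s := by
  have h : ∀ a, gl i a * ∑ s, contraGamma g Γ a k s * F s
      = ∑ s, gl i a * contraGamma g Γ a k s * F s := by
    intro a
    rw [Finset.mul_sum]
    exact Finset.sum_congr rfl fun s _ => by ring
  rw [Finset.sum_congr rfl fun a _ => h a, Finset.sum_comm]
  have h2 : ∀ s, ∑ a, gl i a * contraGamma g Γ a k s * F s
      = -(Γ k i s * F s) := by
    intro s
    rw [← Finset.sum_mul, gl_contraGamma g gl Γ hg_inv i k s, neg_mul]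
  rw [Finset.sum_congr rfl fun s _ => h2 s, Finset.sum_neg_distrib]

lemma swapGamma (hg_symm : ∀ i j, g i j = g j i)
    (hΓ_symm : ∀ i j k, Γ i j k = Γ i k j) (k i l m : Fin n) :
    ∑ s, Γ k i s * contraGamma g Γ s l m = ∑ s, contraGamma g Γ s k i * Γ l s m := by
  unfold contraGamma
  have h1 : ∀ s, Γ k i s * -(∑ t, g s t * Γ l t m)
      = ∑ t, -(Γ k i s * g s t * Γ l t m) := by
    intro s
    rw [mul_neg, Finset.mul_sum, ← Finset.sum_neg_distrib]
    exact Finset.sum_congr rfl fun t _ => by ring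
  have h2 : ∀ s, -(∑ t, g s t * Γ k t i) * Γ l s m
      = ∑ t, -(g s t * Γ k t i * Γ l s m) := by
    intro s
    rw [neg_mul, Finset.sum_mul, ← Finset.sum_neg_distrib]
  rw [Finset.sum_congr rfl fun s _ => h1 s, Finset.sum_congr rfl fun s _ => h2 s,
    Finset.sum_comm]
  refine Finset.sum_congr rfl fun a _ => Finset.sum_congr rfl fun b _ => ?_
  rw [hg_symm b a, hΓ_symm k i b]
  ring

/-- The contracted zero-curvature identity. -/
lemma curlGc (hg_symm : ∀ i j, g i j = g j i)
    (hΓ_symm : ∀ i j k, Γ i j k = Γ i k j)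
    (hg_inv : ∀ i j, ∑ s, g i s * gl s j = if i = j then 1 else 0)
    (hflat : ∀ i j k l,
      (∑ s, g i s * (D.pd (s, 0) (contraGamma g Γ j k l)
          - D.pd (l, 0) (contraGamma g Γ j k s)))
        - (∑ s, contraGamma g Γ i j s * contraGamma g Γ s k l)
        + (∑ s, contraGamma g Γ i k s * contraGamma g Γ s j l) = 0)
    (k l i m : Fin n) :
    D.pd (i, 0) (contraGamma g Γ k l m) - D.pd (m, 0) (contraGamma g Γ k l i)
      = ∑ s, (contraGamma g Γ s k m * Γ l s i - contraGamma g Γ s k i * Γ l s m) := by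
  have hF : ∀ a, ∑ s, g a s * (D.pd (s, 0) (contraGamma g Γ k l m)
        - D.pd (m, 0) (contraGamma g Γ k l s))
      = (∑ s, contraGamma g Γ a k s * contraGamma g Γ s l m)
        - (∑ s, contraGamma g Γ a l s * contraGamma g Γ s k m) := by
    intro a
    linear_combination hflat a k l m
  have hL : ∑ a, gl i a * ∑ s, g a s * (D.pd (s, 0) (contraGamma g Γ k l m)
        - D.pd (m, 0) (contraGamma g Γ k l s))
      = D.pd (i, 0) (contraGamma g Γ k l m) - D.pd (m, 0) (contraGamma g Γ k l i) :=
    contract_g g gl hg_inv i _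
  have hR : ∑ a, gl i a * ((∑ s, contraGamma g Γ a k s * contraGamma g Γ s l m)
        - (∑ s, contraGamma g Γ a l s * contraGamma g Γ s k m))
      = (-∑ s, Γ k i s * contraGamma g Γ s l m)
        - (-∑ s, Γ l i s * contraGamma g Γ s k m) := by
    have e : ∀ a, gl i a * ((∑ s, contraGamma g Γ a k s * contraGamma g Γ s l m)
          - (∑ s, contraGamma g Γ a l s * contraGamma g Γ s k m))
        = gl i a * (∑ s, contraGamma g Γ a k s * contraGamma g Γ s l m)
          - gl i a * (∑ s, contraGamma g Γ a l s * contraGamma g Γ s k m) :=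
      fun a => mul_sub _ _ _
    rw [Finset.sum_congr rfl fun a _ => e a, Finset.sum_sub_distrib,
      contract_gc g gl Γ hg_inv i k _, contract_gc g gl Γ hg_inv i l _]
  have hEq : D.pd (i, 0) (contraGamma g Γ k l m) - D.pd (m, 0) (contraGamma g Γ k l i)
      = (-∑ s, Γ k i s * contraGamma g Γ s l m)
        - (-∑ s, Γ l i s * contraGamma g Γ s k m) := by
    rw [← hL, ← hR]
    exact Finset.sum_congr rfl fun a _ => by rw [hF a]
  rw [hEq, swapGamma g Γ hg_symm hΓ_symm k i l m]
  have h3 : ∑ s, Γ l i s * contraGamma g Γ s k m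
      = ∑ s, contraGamma g Γ s k m * Γ l s i := by
    refine Finset.sum_congr rfl fun s _ => ?_
    rw [hΓ_symm l i s]
    ring
  rw [h3, Finset.sum_sub_distrib]
  ring

/-- `pcoef` in terms of covariant derivatives. -/
lemma pcoef_covD (ω : Fin n → A) (k c : Fin n) :
    D.pcoef g Γ ω k c = ∑ l, g k l * covD D Γ ω c l := by
  unfold pcoef covD
  rw [Finset.sum_add_distrib]
  have h1 : ∑ l, contraGamma g Γ k l c * ω l
      = ∑ l, ∑ s, -(g k s * Γ l s c * ω l) := by
    refine Finset.sum_congr rfl fun l _ => ?_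
    unfold contraGamma
    rw [neg_mul, Finset.sum_mul, ← Finset.sum_neg_distrib]
  have h2 : ∀ l : Fin n, g k l * (D.pd (c, 0) (ω l) - ∑ s, Γ s l c * ω s)
      = g k l * D.pd (c, 0) (ω l) + ∑ s, -(g k l * Γ s l c * ω s) := by
    intro l
    have h3 : ∑ s, -(g k l * Γ s l c * ω s) = -(g k l * ∑ s, Γ s l c * ω s) := by
      rw [Finset.sum_neg_distrib, Finset.mul_sum]
      congr 1
      exact Finset.sum_congr rfl fun s _ => by ring
    rw [h3]
    ring
  rw [Finset.sum_congr rfl fun l _ => h2 l, Finset.sum_add_distrib, h1,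
    Finset.sum_comm]

/-- The key "curl" formula for `pcoef`. -/
lemma curl_pcoef (hg_symm : ∀ i j, g i j = g j i)
    (hΓ_symm : ∀ i j k, Γ i j k = Γ i k j)
    (hg_inv : ∀ i j, ∑ s, g i s * gl s j = if i = j then 1 else 0)
    (hΓ_metric : ∀ k i j, D.pd (k, 0) (gl i j) =
      ∑ l, (gl l j * Γ l i k + gl i l * Γ l j k))
    (hflat : ∀ i j k l,
      (∑ s, g i s * (D.pd (s, 0) (contraGamma g Γ j k l)
          - D.pd (l, 0) (contraGamma g Γ j k s)))
        - (∑ s, contraGamma g Γ i j s * contraGamma g Γ s k l)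
        + (∑ s, contraGamma g Γ i k s * contraGamma g Γ s j l) = 0)
    (ω : Fin n → A) (k i m : Fin n) :
    D.pd (i, 0) (D.pcoef g Γ ω k m) - D.pd (m, 0) (D.pcoef g Γ ω k i)
      = ∑ l, (contraGamma g Γ l k i * covD D Γ ω m l
          - contraGamma g Γ l k m * covD D Γ ω i l) := by
  have hdP : ∀ c e : Fin n, D.pd (c, 0) (D.pcoef g Γ ω k e)
      = ∑ l, (D.pd (c, 0) (g k l) * D.pd (e, 0) (ω l)
          + g k l * D.pd (c, 0) (D.pd (e, 0) (ω l))
          + D.pd (c, 0) (contraGamma g Γ k l e) * ω l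
          + contraGamma g Γ k l e * D.pd (c, 0) (ω l)) := by
    intro c e
    unfold pcoef
    rw [D.pd_sum]
    refine Finset.sum_congr rfl fun l _ => ?_
    rw [D.pd_add, D.pd_mul, D.pd_mul]
    ring
  rw [hdP, hdP, ← Finset.sum_sub_distrib]
  have hper : ∀ l : Fin n,
      (D.pd (i, 0) (g k l) * D.pd (m, 0) (ω l)
          + g k l * D.pd (i, 0) (D.pd (m, 0) (ω l))
          + D.pd (i, 0) (contraGamma g Γ k l m) * ω l
          + contraGamma g Γ k l m * D.pd (i, 0) (ω l))
        - (D.pd (m, 0) (g k l) * D.pd (i, 0) (ω l)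
          + g k l * D.pd (m, 0) (D.pd (i, 0) (ω l))
          + D.pd (m, 0) (contraGamma g Γ k l i) * ω l
          + contraGamma g Γ k l i * D.pd (m, 0) (ω l))
      = contraGamma g Γ l k i * D.pd (m, 0) (ω l)
          - contraGamma g Γ l k m * D.pd (i, 0) (ω l)
          + ((∑ s, (contraGamma g Γ s k m * Γ l s i
              - contraGamma g Γ s k i * Γ l s m)) * ω l) := by
    intro l
    have hc := D.pd_comm (i, 0) (m, 0) (ω l)
    have hdg1 := dg_eq D g gl Γ hg_symm hΓ_symm hg_inv hΓ_metric i k l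
    have hdg2 := dg_eq D g gl Γ hg_symm hΓ_symm hg_inv hΓ_metric m k l
    have hcurl := curlGc D g gl Γ hg_symm hΓ_symm hg_inv hflat k l i m
    rw [hdg1, hdg2, hc]
    linear_combination ω l * hcurl
  rw [Finset.sum_congr rfl fun l _ => hper l]
  -- split both sides into canonical pieces
  have hsplit : ∀ l : Fin n,
      (∑ s, (contraGamma g Γ s k m * Γ l s i - contraGamma g Γ s k i * Γ l s m)) * ω l
        = (∑ s, contraGamma g Γ s k m * Γ l s i * ω l)
          - ∑ s, contraGamma g Γ s k i * Γ l s m * ω l := by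
    intro l
    rw [Finset.sum_mul, ← Finset.sum_sub_distrib]
    exact Finset.sum_congr rfl fun s _ => by ring
  have hRper : ∀ l : Fin n,
      contraGamma g Γ l k i * covD D Γ ω m l - contraGamma g Γ l k m * covD D Γ ω i l
        = contraGamma g Γ l k i * D.pd (m, 0) (ω l)
          - contraGamma g Γ l k m * D.pd (i, 0) (ω l)
          - ∑ s, contraGamma g Γ l k i * Γ s l m * ω s
          + ∑ s, contraGamma g Γ l k m * Γ s l i * ω s := by
    intro l
    unfold covD
    rw [mul_sub, mul_sub, Finset.mul_sum, Finset.mul_sum]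
    ring
  simp only [hsplit, hRper]
  simp only [Finset.sum_add_distrib, Finset.sum_sub_distrib]
  have hX1 : ∑ l, ∑ s, contraGamma g Γ l k i * Γ s l m * ω s
      = ∑ l, ∑ s, contraGamma g Γ s k i * Γ l s m * ω l := Finset.sum_comm
  have hX2 : ∑ l, ∑ s, contraGamma g Γ l k m * Γ s l i * ω s
      = ∑ l, ∑ s, contraGamma g Γ s k m * Γ l s i * ω l := Finset.sum_comm
  rw [hX1, hX2]
  ring

end DiffPolyAlg
namespace DiffPolyAlg

variable {n : ℕ} {A : Type*} [CommRing A] [Algebra ℝ A] (D : DiffPolyAlg n A)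
variable (g gl : Fin n → Fin n → A) (Γ : Fin n → Fin n → Fin n → A)

lemma contract_triple (hg_symm : ∀ i j, g i j = g j i)
    (hΓ_symm : ∀ i j k, Γ i j k = Γ i k j) (W ρ : Fin n → A) (c : Fin n) :
    ∑ j, ∑ l, ∑ s, g j l * W l * (Γ s c j * ρ s)
      = -∑ k, ∑ l, W l * contraGamma g Γ l k c * ρ k := by
  have hE : ∑ k, ∑ l, W l * contraGamma g Γ l k c * ρ k
      = -∑ k, ∑ l, ∑ t, W l * (g l t * Γ k t c) * ρ k := by
    rw [← Finset.sum_neg_distrib]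
    refine Finset.sum_congr rfl fun k _ => ?_
    rw [← Finset.sum_neg_distrib]
    refine Finset.sum_congr rfl fun l _ => ?_
    unfold contraGamma
    rw [mul_neg, neg_mul, Finset.mul_sum, Finset.sum_mul]
  rw [hE, neg_neg, sum_swap13]
  refine Finset.sum_congr rfl fun a _ => Finset.sum_congr rfl fun l _ =>
    Finset.sum_congr rfl fun b _ => ?_
  rw [hg_symm b l, hΓ_symm a c b]
  ring

end DiffPolyAlg

open DiffPolyAlg in
/-- Let `g^{ij}(u)` be a smooth nondegenerate contravariant
metric of zero curvature with Levi-Civita connection `∇`, and let `P` be the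
associated Poisson structure of hydrodynamic type. If the components `α_i(u)`,
`β_i(u)` of two reduced 1-forms depend only on the coordinates `u¹,…,uⁿ`, then
the bracket `{α,β} := Lie_{Pβ}α − Lie_{Pα}β + δ⟨β, Pα⟩` has components
`{α,β}_i = Σ_{k,l,m} ( (∇_m β_l) g^{kl} (∇_k α_i) − (∇_m α_l) g^{kl} (∇_k β_i) ) u^m_x`. -/
theorem hydro_bracket_hydrodynamic_forms {n : ℕ} (hn : 1 ≤ n) {A : Type*}
    [CommRing A] [Algebra ℝ A] (D : DiffPolyAlg n A)
    (g gl : Fin n → Fin n → A) (Γ : Fin n → Fin n → Fin n → A)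
    -- `g`, its inverse `gl` and `Γ` are functions of `u = u_{(0)}` only
    (hg_fun : ∀ i j (v : Fin n × ℕ), 1 ≤ v.2 → D.pd v (g i j) = 0)
    (hgl_fun : ∀ i j (v : Fin n × ℕ), 1 ≤ v.2 → D.pd v (gl i j) = 0)
    (hΓ_fun : ∀ i j k (v : Fin n × ℕ), 1 ≤ v.2 → D.pd v (Γ i j k) = 0)
    -- `g` is symmetric and nondegenerate, with inverse (covariant) metric `gl`
    (hg_symm : ∀ i j, g i j = g j i)
    (hg_inv : ∀ i j, ∑ s, g i s * gl s j = if i = j then 1 else 0)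
    -- `Γ` is the Levi-Civita connection of `g`: torsion-free and metric
    (hΓ_symm : ∀ i j k, Γ i j k = Γ i k j)
    (hΓ_metric : ∀ k i j, D.pd (k, 0) (gl i j) =
      ∑ l, (gl l j * Γ l i k + gl i l * Γ l j k))
    -- zero curvature, in contravariant form
    (hflat : ∀ i j k l,
      (∑ s, g i s * (D.pd (s, 0) (contraGamma g Γ j k l)
          - D.pd (l, 0) (contraGamma g Γ j k s)))
        - (∑ s, contraGamma g Γ i j s * contraGamma g Γ s k l)
        + (∑ s, contraGamma g Γ i k s * contraGamma g Γ s j l) = 0)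
    (α β : Fin n → A)
    -- the components of `α` and `β` depend only on `u¹,…,uⁿ`
    (hα_fun : ∀ k (v : Fin n × ℕ), 1 ≤ v.2 → D.pd v (α k) = 0)
    (hβ_fun : ∀ k (v : Fin n × ℕ), 1 ≤ v.2 → D.pd v (β k) = 0) :
    ∀ i : Fin n,
      reducedRawBracketG D g Γ α β i =
        ∑ m, ∑ k, ∑ l,
          (covD D Γ β m l * g k l * covD D Γ α k i
            - covD D Γ α m l * g k l * covD D Γ β k i) * D.u (m, 1) := by
  intro i
  have hgF : ∀ a b, D.FunOnly (g a b) := fun a b v hv => hg_fun a b v hv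
  have hΓF : ∀ a b c, D.FunOnly (Γ a b c) := fun a b c v hv => hΓ_fun a b c v hv
  have hαF : ∀ a, D.FunOnly (α a) := fun a v hv => hα_fun a v hv
  have hβF : ∀ a, D.FunOnly (β a) := fun a v hv => hβ_fun a v hv
  rw [D.reduced_eq g Γ α β hgF hΓF hαF hβF i, D.comp0_eq g Γ α β hgF hΓF hαF hβF i]
  have hfun : D.FunOnly (∑ k, α k * D.pcoef g Γ β k i) :=
    D.funOnly_sum fun k _ =>
      D.funOnly_mul (hαF k) (D.funOnly_pcoef g Γ hgF hΓF hβF k i)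
  rw [D.Dx_funOnly hfun, ← Finset.sum_sub_distrib]
  refine Finset.sum_congr rfl fun m _ => ?_
  have hRHS : ∑ k, ∑ l,
      (covD D Γ β m l * g k l * covD D Γ α k i
        - covD D Γ α m l * g k l * covD D Γ β k i) * D.u (m, 1)
      = D.u (m, 1) * ∑ k, ∑ l,
        (covD D Γ β m l * g k l * covD D Γ α k i
          - covD D Γ α m l * g k l * covD D Γ β k i) := by
    rw [Finset.mul_sum]
    refine Finset.sum_congr rfl fun k _ => ?_
    rw [Finset.mul_sum]
    exact Finset.sum_congr rfl fun l _ => by ring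
  rw [hRHS, ← mul_sub]
  congr 1
  -- the core identity, for fixed `i`, `m`
  have hpdW : ∀ (ω : Fin n → A) (c e : Fin n),
      D.pd (c, 0) (ω e) = covD D Γ ω c e + ∑ s, Γ s e c * ω s := by
    intro ω c e
    unfold covD
    ring
  -- piece 1
  have hP1 : ∑ j, D.pcoef g Γ β j m * D.pd (j, 0) (α i)
      = (∑ k, ∑ l, covD D Γ β m l * g k l * covD D Γ α k i)
        - ∑ k, ∑ l, covD D Γ β m l * contraGamma g Γ l k i * α k := by
    have h1 : ∑ j, D.pcoef g Γ β j m * D.pd (j, 0) (α i)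
        = ∑ j, ∑ l, (g j l * covD D Γ β m l * covD D Γ α j i
            + ∑ s, g j l * covD D Γ β m l * (Γ s i j * α s)) := by
      refine Finset.sum_congr rfl fun j _ => ?_
      rw [pcoef_covD D g Γ β j m, hpdW α j i, Finset.sum_mul]
      refine Finset.sum_congr rfl fun l _ => ?_
      rw [mul_add, Finset.mul_sum]
    rw [h1]
    simp only [Finset.sum_add_distrib]
    rw [contract_triple g Γ hg_symm hΓ_symm (fun l => covD D Γ β m l) α i]
    rw [sub_eq_add_neg]
    congr 1
    exact Finset.sum_congr rfl fun k _ => Finset.sum_congr rfl fun l _ => by ring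
  -- piece 2
  have hP2 : ∑ j, D.pcoef g Γ α j m * D.pd (j, 0) (β i)
      = (∑ k, ∑ l, covD D Γ α m l * g k l * covD D Γ β k i)
        - ∑ k, ∑ l, covD D Γ α m l * contraGamma g Γ l k i * β k := by
    have h1 : ∑ j, D.pcoef g Γ α j m * D.pd (j, 0) (β i)
        = ∑ j, ∑ l, (g j l * covD D Γ α m l * covD D Γ β j i
            + ∑ s, g j l * covD D Γ α m l * (Γ s i j * β s)) := by
      refine Finset.sum_congr rfl fun j _ => ?_
      rw [pcoef_covD D g Γ α j m, hpdW β j i, Finset.sum_mul]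
      refine Finset.sum_congr rfl fun l _ => ?_
      rw [mul_add, Finset.mul_sum]
    rw [h1]
    simp only [Finset.sum_add_distrib]
    rw [contract_triple g Γ hg_symm hΓ_symm (fun l => covD D Γ α m l) β i]
    rw [sub_eq_add_neg]
    congr 1
    exact Finset.sum_congr rfl fun k _ => Finset.sum_congr rfl fun l _ => by ring
  -- piece 3
  have hP3 : ∑ l, D.pd (i, 0) (β l) * D.pcoef g Γ α l m
      = (∑ k, ∑ l, covD D Γ β i k * g k l * covD D Γ α m l)
        - ∑ k, ∑ l, covD D Γ α m l * contraGamma g Γ l k i * β k := by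
    have hA : ∑ l, D.pd (i, 0) (β l) * D.pcoef g Γ α l m
        = (∑ j, ∑ l, covD D Γ β i j * (g j l * covD D Γ α m l))
          + ∑ j, ∑ a, ∑ b, Γ a j i * β a * (g j b * covD D Γ α m b) := by
      rw [← Finset.sum_add_distrib]
      refine Finset.sum_congr rfl fun j _ => ?_
      rw [pcoef_covD D g Γ α j m, hpdW β i j, add_mul, Finset.mul_sum,
        Finset.sum_mul_sum]
    have hB : ∑ j, ∑ a, ∑ b, Γ a j i * β a * (g j b * covD D Γ α m b)
        = ∑ j, ∑ l, ∑ s, g j l * covD D Γ α m l * (Γ s i j * β s) := by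
      refine Finset.sum_congr rfl fun j _ => ?_
      rw [Finset.sum_comm]
      refine Finset.sum_congr rfl fun l _ => Finset.sum_congr rfl fun s _ => ?_
      rw [hΓ_symm s j i]
      ring
    rw [hA, hB,
      contract_triple g Γ hg_symm hΓ_symm (fun l => covD D Γ α m l) β i,
      sub_eq_add_neg]
    congr 1
    exact Finset.sum_congr rfl fun k _ => Finset.sum_congr rfl fun l _ => by ring
  -- piece 5
  have hP5 : ∑ k, D.pd (m, 0) (α k) * D.pcoef g Γ β k i
      = (∑ k, ∑ l, covD D Γ β i k * g k l * covD D Γ α m l)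
        - ∑ k, ∑ l, covD D Γ β i l * contraGamma g Γ l k m * α k := by
    have hA : ∑ k, D.pd (m, 0) (α k) * D.pcoef g Γ β k i
        = (∑ j, ∑ l, covD D Γ α m j * (g j l * covD D Γ β i l))
          + ∑ j, ∑ a, ∑ b, Γ a j m * α a * (g j b * covD D Γ β i b) := by
      rw [← Finset.sum_add_distrib]
      refine Finset.sum_congr rfl fun j _ => ?_
      rw [pcoef_covD D g Γ β j i, hpdW α m j, add_mul, Finset.mul_sum,
        Finset.sum_mul_sum]
    have hB : ∑ j, ∑ a, ∑ b, Γ a j m * α a * (g j b * covD D Γ β i b)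
        = ∑ j, ∑ l, ∑ s, g j l * covD D Γ β i l * (Γ s m j * α s) := by
      refine Finset.sum_congr rfl fun j _ => ?_
      rw [Finset.sum_comm]
      refine Finset.sum_congr rfl fun l _ => Finset.sum_congr rfl fun s _ => ?_
      rw [hΓ_symm s j m]
      ring
    have hF : ∑ j, ∑ l, covD D Γ α m j * (g j l * covD D Γ β i l)
        = ∑ k, ∑ l, covD D Γ β i k * g k l * covD D Γ α m l := by
      rw [Finset.sum_comm]
      refine Finset.sum_congr rfl fun k _ => Finset.sum_congr rfl fun l _ => ?_
      rw [hg_symm l k]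
      ring
    rw [hA, hB, hF,
      contract_triple g Γ hg_symm hΓ_symm (fun l => covD D Γ β i l) α m,
      sub_eq_add_neg]
  -- piece 4
  have hP4 : ∑ k, α k * (D.pd (i, 0) (D.pcoef g Γ β k m)
        - D.pd (m, 0) (D.pcoef g Γ β k i))
      = (∑ k, ∑ l, covD D Γ β m l * contraGamma g Γ l k i * α k)
        - ∑ k, ∑ l, covD D Γ β i l * contraGamma g Γ l k m * α k := by
    have h1 : ∀ k : Fin n, α k * (D.pd (i, 0) (D.pcoef g Γ β k m)
          - D.pd (m, 0) (D.pcoef g Γ β k i))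
        = ∑ l, (covD D Γ β m l * contraGamma g Γ l k i * α k
            - covD D Γ β i l * contraGamma g Γ l k m * α k) := by
      intro k
      rw [curl_pcoef D g gl Γ hg_symm hΓ_symm hg_inv hΓ_metric hflat β k i m,
        Finset.mul_sum]
      exact Finset.sum_congr rfl fun l _ => by ring
    rw [Finset.sum_congr rfl fun k _ => h1 k]
    simp only [Finset.sum_sub_distrib]
  -- combination lemma
  have hcomb : (∑ k, α k * D.pd (i, 0) (D.pcoef g Γ β k m))
        - ∑ k, α k * D.pd (m, 0) (D.pcoef g Γ β k i)
      = ∑ k, α k * (D.pd (i, 0) (D.pcoef g Γ β k m)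
          - D.pd (m, 0) (D.pcoef g Γ β k i)) := by
    rw [← Finset.sum_sub_distrib]
    exact Finset.sum_congr rfl fun k _ => by ring
  -- splitting of the last `comp0` sum
  have hs1 : ∑ l, (D.pd (i, 0) (β l) * D.pcoef g Γ α l m
        + β l * D.pd (i, 0) (D.pcoef g Γ α l m))
      = (∑ l, D.pd (i, 0) (β l) * D.pcoef g Γ α l m)
        + ∑ l, β l * D.pd (i, 0) (D.pcoef g Γ α l m) := Finset.sum_add_distrib
  -- splitting of the Dx term
  have hDxm : D.pd (m, 0) (∑ k, α k * D.pcoef g Γ β k i)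
      = (∑ k, D.pd (m, 0) (α k) * D.pcoef g Γ β k i)
        + ∑ k, α k * D.pd (m, 0) (D.pcoef g Γ β k i) := by
    rw [D.pd_sum, ← Finset.sum_add_distrib]
    exact Finset.sum_congr rfl fun k _ => D.pd_mul _ _ _
  -- target split
  have hT : ∑ k, ∑ l, (covD D Γ β m l * g k l * covD D Γ α k i
        - covD D Γ α m l * g k l * covD D Γ β k i)
      = (∑ k, ∑ l, covD D Γ β m l * g k l * covD D Γ α k i)
        - ∑ k, ∑ l, covD D Γ α m l * g k l * covD D Γ β k i := by
    simp only [Finset.sum_sub_distrib]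
  linear_combination hP1 - hP2 + hP3 + hP4 + hcomb - hP5 + hs1 - hDxm - hT
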